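/- Let R be a commutative ring with unit, M an R-module, α : R³ → M a function vanishing whenever one of its arguments equals 0 or 1 and satisfying (S12) x·α(y,z,t) − α(xy,z,t) + α(x,yz,t) − α(x,y,zt) + α(x,y,z)·t = 0, and β : R² → M a function satisfying (S20) α(x,y,z) − α(x,z,y) + α(z,x,y) + x·β(y,z) − β(xy,z) + y·β(x,z) = 0 and (S21) α(x,y,z) − α(y,x,z) + α(y,z,x) − y·β(x,z) + β(x,yz) − z·β(x,y) = 0 for all x,y,z,t ∈ R. Then the groupoid 𝒮, equipped with the monoidal structure x ⊗ y := xy, (x,a) ⊗ (y,b) := (xy, x·b + y·a), unit object 1, identity unit constraints, and associativity constraint (x⊗y)⊗z ≅ x⊗(y⊗z) given by (xyz, α(x,y,z)), is a braided monoidal category with braiding c_{x,y} : x⊗y → y⊗x given by the morphism (xy, β(x,y)); that is, c is natural and satisfies both hexagon axioms. -/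

import Mathlib

/-!
STATEMENT 7: Let `R` be a commutative ring with unit, `M` an `R`-module,
`α : R³ → M` a function vanishing whenever one of its arguments equals `0` or `1` and
satisfying (S12) `x·α(y,z,t) − α(xy,z,t) + α(x,yz,t) − α(x,y,zt) + α(x,y,z)·t = 0`, and
`β : R² → M` a function satisfying
(S20) `α(x,y,z) − α(x,z,y) + α(z,x,y) + x·β(y,z) − β(xy,z) + y·β(x,z) = 0` and
(S21) `α(x,y,z) − α(y,x,z) + α(y,z,x) − y·β(x,z) + β(x,yz) − z·β(x,y) = 0`.
Then the groupoid `𝒮`, equipped with the monoidal structure `x ⊗ y := xy`,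
`(x,a) ⊗ (y,b) := (xy, x·b + y·a)`, unit object `1`, identity unit constraints, and
associativity constraint `(x⊗y)⊗z ≅ x⊗(y⊗z)` given by `(xyz, α(x,y,z))`, is a braided
monoidal category with braiding `c_{x,y} : x⊗y → y⊗x` given by the morphism
`(xy, β(x,y))`; that is, `c` is natural and satisfies both hexagon axioms.
-/

open CategoryTheory MonoidalCategory

/-- Objects of the groupoid `𝒮`: the elements of `R` (the parameter `M` is a phantom). -/
structure GObj (R M : Type) where
  base : R

/-- Morphisms of the groupoid `𝒮`: a morphism `a → b` exists only when `a = b`, and is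
given by an element of `M`. -/
structure GHom {R M : Type} (a b : GObj R M) where
  eq : a.base = b.base
  val : M

theorem GHom.ext' {R M : Type} {a b : GObj R M} {f g : GHom a b}
    (h : f.val = g.val) : f = g := by
  cases f; cases g; cases h; rfl

variable (R M : Type)

instance GObj.category [AddCommGroup M] : Category (GObj R M) where
  Hom a b := GHom a b
  id a := ⟨rfl, 0⟩
  comp f g := ⟨f.eq.trans g.eq, f.val + g.val⟩
  id_comp f := GHom.ext' (zero_add _)
  comp_id f := GHom.ext' (add_zero _)
  assoc f g h := GHom.ext' (add_assoc _ _ _)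

/-- The monoidal structure on `𝒮` determined by the associativity data `α` : the tensor
product is the multiplication of `R`, `(x,a) ⊗ (y,b) = (xy, x·b + y·a)`, the unit is
`1` with identity unit constraints, and the associator is `(xyz, α(x,y,z))`. -/
def gMonStruct [CommRing R] [AddCommGroup M] [Module R M] (α : R → R → R → M) :
    MonoidalCategoryStruct (GObj R M) where
  tensorObj a b := ⟨a.base * b.base⟩
  whiskerLeft a _ _ f := ⟨by dsimp; rw [f.eq], a.base • f.val⟩
  whiskerRight f b := ⟨by dsimp; rw [f.eq], b.base • f.val⟩
  tensorHom {a₁ b₁ a₂ b₂} f g := ⟨by dsimp; rw [f.eq, g.eq], a₁.base • g.val + a₂.base • f.val⟩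
  tensorUnit := ⟨1⟩
  associator a b c :=
    { hom := ⟨mul_assoc a.base b.base c.base, α a.base b.base c.base⟩
      inv := ⟨(mul_assoc a.base b.base c.base).symm, -α a.base b.base c.base⟩
      hom_inv_id := GHom.ext' (add_neg_cancel _)
      inv_hom_id := GHom.ext' (neg_add_cancel _) }
  leftUnitor a :=
    { hom := ⟨one_mul a.base, 0⟩
      inv := ⟨(one_mul a.base).symm, 0⟩
      hom_inv_id := GHom.ext' (zero_add 0)
      inv_hom_id := GHom.ext' (zero_add 0) }
  rightUnitor a :=
    { hom := ⟨mul_one a.base, 0⟩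
      inv := ⟨(mul_one a.base).symm, 0⟩
      hom_inv_id := GHom.ext' (zero_add 0)
      inv_hom_id := GHom.ext' (zero_add 0) }

/-!
A morphism of `𝒮` is determined by its `M`-component and composition adds components, so
every coherence axiom becomes a linear identity in `M`: the pentagon is the cocycle
identity (S12), the triangle is `α(x,1,z) = 0`, and the two hexagons are (S21) and (S20).
Naturality of the associator and of the braiding holds for any `α`, `β`, because a morphism
`x → y` forces `x = y`.
-/

section

variable {R M} [CommRing R] [AddCommGroup M] [Module R M]

abbrev gMonoidalCategory (α : R → R → R → M) (hα₁ : ∀ x z : R, α x 1 z = 0)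
    (hS12 : ∀ x y z t : R,
      x • α y z t - α (x * y) z t + α x (y * z) t - α x y (z * t) + t • α x y z = 0) :
    MonoidalCategory (GObj R M) :=
  letI := gMonStruct R M α
  { tensorHom_def := fun {X₁ Y₁ X₂ _} f g => GHom.ext' <| by
      show X₁.base • g.val + X₂.base • f.val = X₂.base • f.val + Y₁.base • g.val
      rw [← f.eq, add_comm]
    id_tensorHom_id := fun X₁ X₂ => GHom.ext' <| by
      show X₁.base • (0 : M) + X₂.base • (0 : M) = 0
      simp
    tensorHom_comp_tensorHom := fun {X₁ Y₁ _ X₂ Y₂ _} f₁ f₂ g₁ g₂ => GHom.ext' <| by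
      show (X₁.base • f₂.val + X₂.base • f₁.val) + (Y₁.base • g₂.val + Y₂.base • g₁.val)
        = X₁.base • (f₂.val + g₂.val) + X₂.base • (f₁.val + g₁.val)
      rw [← f₁.eq, ← f₂.eq]
      module
    whiskerLeft_id := fun X _ => GHom.ext' (smul_zero X.base)
    id_whiskerRight := fun _ Y => GHom.ext' (smul_zero Y.base)
    associator_naturality := fun {X₁ X₂ X₃ Y₁ Y₂ Y₃} f₁ f₂ f₃ => GHom.ext' <| by
      show ((X₁.base * X₂.base) • f₃.val + X₃.base • (X₁.base • f₂.val + X₂.base • f₁.val))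
          + α Y₁.base Y₂.base Y₃.base
        = α X₁.base X₂.base X₃.base
          + (X₁.base • (X₂.base • f₃.val + X₃.base • f₂.val) + (X₂.base * X₃.base) • f₁.val)
      rw [← f₁.eq, ← f₂.eq, ← f₃.eq]
      module
    leftUnitor_naturality := fun f => GHom.ext' <| by
      show (1 : R) • f.val + 0 = 0 + f.val
      simp
    rightUnitor_naturality := fun f => GHom.ext' <| by
      show (1 : R) • f.val + 0 = 0 + f.val
      simp
    pentagon := fun W X Y Z => GHom.ext' <| by
      show Z.base • α W.base X.base Y.base
          + (α W.base (X.base * Y.base) Z.base + W.base • α X.base Y.base Z.base)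
        = α (W.base * X.base) Y.base Z.base + α W.base X.base (Y.base * Z.base)
      linear_combination (norm := module) hS12 W.base X.base Y.base Z.base
    triangle := fun X Y => GHom.ext' <| by
      show α X.base 1 Y.base + X.base • (0 : M) = Y.base • (0 : M)
      simp [hα₁] }

abbrev gBraidedCategory (α : R → R → R → M) (β : R → R → M) (hα₁ : ∀ x z : R, α x 1 z = 0)
    (hS12 : ∀ x y z t : R,
      x • α y z t - α (x * y) z t + α x (y * z) t - α x y (z * t) + t • α x y z = 0)
    (hS20 : ∀ x y z : R,
      α x y z - α x z y + α z x y + x • β y z - β (x * y) z + y • β x z = 0)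
    (hS21 : ∀ x y z : R,
      α x y z - α y x z + α y z x - y • β x z + β x (y * z) - z • β x y = 0) :
    @BraidedCategory (GObj R M) _ (gMonoidalCategory α hα₁ hS12) :=
  letI := gMonoidalCategory α hα₁ hS12
  { braiding := fun X Y =>
      { hom := ⟨mul_comm X.base Y.base, β X.base Y.base⟩
        inv := ⟨mul_comm Y.base X.base, -β X.base Y.base⟩
        hom_inv_id := GHom.ext' (add_neg_cancel _)
        inv_hom_id := GHom.ext' (neg_add_cancel _) }
    braiding_naturality_right := fun X _ _ f => GHom.ext' <| by
      show X.base • f.val + β X.base _ = β X.base _ + X.base • f.val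
      rw [← f.eq, add_comm]
    braiding_naturality_left := fun f Z => GHom.ext' <| by
      show Z.base • f.val + β _ Z.base = β _ Z.base + Z.base • f.val
      rw [← f.eq, add_comm]
    hexagon_forward := fun X Y Z => GHom.ext' <| by
      show α X.base Y.base Z.base + (β X.base (Y.base * Z.base) + α Y.base Z.base X.base)
        = Z.base • β X.base Y.base + (α Y.base X.base Z.base + Y.base • β X.base Z.base)
      linear_combination (norm := module) hS21 X.base Y.base Z.base
    hexagon_reverse := fun X Y Z => GHom.ext' <| by
      show -α X.base Y.base Z.base + (β (X.base * Y.base) Z.base + -α Z.base X.base Y.base)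
        = X.base • β Y.base Z.base + (-α X.base Z.base Y.base + Y.base • β X.base Z.base)
      linear_combination (norm := module) -hS20 X.base Y.base Z.base }

end

/-- `𝒮` is a braided monoidal category, with the given monoidal structure and with
braiding `c_{x,y} = (xy, β(x,y))`. -/
theorem gObj_braidedMonoidal [CommRing R] [AddCommGroup M] [Module R M]
    (α : R → R → R → M) (β : R → R → M)
    (hαnorm : ∀ x y z : R, α 0 y z = 0 ∧ α x 0 z = 0 ∧ α x y 0 = 0 ∧
      α 1 y z = 0 ∧ α x 1 z = 0 ∧ α x y 1 = 0)
    (hS12 : ∀ x y z t : R,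
      x • α y z t - α (x * y) z t + α x (y * z) t - α x y (z * t) + t • α x y z = 0)
    (hS20 : ∀ x y z : R,
      α x y z - α x z y + α z x y + x • β y z - β (x * y) z + y • β x z = 0)
    (hS21 : ∀ x y z : R,
      α x y z - α y x z + α y z x - y • β x z + β x (y * z) - z • β x y = 0) :
    ∃ inst : MonoidalCategory (GObj R M),
      inst.toMonoidalCategoryStruct = gMonStruct R M α ∧
      (letI := inst
       ∃ binst : BraidedCategory (GObj R M),
         ∀ a b : GObj R M, GHom.val (binst.braiding a b).hom = β a.base b.base) := by
  have hα₁ : ∀ x z : R, α x 1 z = 0 := fun x z => (hαnorm x 1 z).2.2.2.2.1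
  exact ⟨gMonoidalCategory α hα₁ hS12, rfl, gBraidedCategory α β hα₁ hS12 hS20 hS21,
    fun _ _ => rfl⟩
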